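/- arXiv:1408.0147 — 2 statements merged into one kernel-verified Lean document; each statement's English description precedes it below -/
import Mathlib

section
/- Let f: [a,b] → ℝ^n be continuously differentiable and G a symmetric positive semidefinite n×n matrix. Then (b-a) ∫_a^b (f'(s))ᵀ G f'(s) ds ≥ (f(b)-f(a))ᵀ G (f(b)-f(a)). -/
open Matrix Real MeasureTheory
open scoped MatrixOrder

lemma sq_intervalIntegral_le {a b : ℝ} (hab : a ≤ b) {u : ℝ → ℝ}
    (hu : ContinuousOn u (Set.Icc a b)) :
    (∫ s in a..b, u s) ^ 2 ≤ (b - a) * ∫ s in a..b, (u s) ^ 2 := by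
  set μ := volume.restrict (Set.Ioc a b) with hμ
  haveI : IsFiniteMeasure μ := by
    constructor
    rw [hμ, Measure.restrict_apply_univ, Real.volume_Ioc]
    exact ENNReal.ofReal_lt_top
  obtain ⟨C, hC⟩ := IsCompact.exists_bound_of_continuousOn isCompact_Icc hu
  have hmeas : AEStronglyMeasurable u μ :=
    (hu.mono Set.Ioc_subset_Icc_self).aestronglyMeasurable measurableSet_Ioc
  have hmem : MemLp u (ENNReal.ofReal 2) μ := by
    refine MemLp.of_bound hmeas C ?_
    rw [hμ]
    exact (ae_restrict_iff' measurableSet_Ioc).2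
      (ae_of_all _ fun x hx => hC x (Set.Ioc_subset_Icc_self hx))
  have hone : MemLp (fun _ : ℝ => (1:ℝ)) (ENNReal.ofReal 2) μ := memLp_const 1
  have hpq : Real.HolderConjugate 2 2 := Real.holderConjugate_iff.mpr ⟨by norm_num, by norm_num⟩
  have h := integral_mul_norm_le_Lp_mul_Lq hpq hmem hone
  have habs : ∫ x, ‖u x‖ * ‖(1:ℝ)‖ ∂μ = ∫ x, |u x| ∂μ := by
    simp [Real.norm_eq_abs]
  have hsq : ∫ x, ‖u x‖ ^ (2:ℝ) ∂μ = ∫ x, (u x) ^ 2 ∂μ := by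
    refine integral_congr_ae (ae_of_all _ fun x => ?_)
    show ‖u x‖ ^ (2:ℝ) = (u x) ^ 2
    rw [Real.norm_eq_abs, show ((2:ℝ)) = ((2:ℕ):ℝ) by norm_num, Real.rpow_natCast, sq_abs]
  have hconst : ∫ _x, ‖(1:ℝ)‖ ^ (2:ℝ) ∂μ = b - a := by
    simp [hμ, Real.volume_Ioc, ENNReal.toReal_ofReal (sub_nonneg.2 hab), hab]
  rw [habs, hsq, hconst] at h
  have hIa : (∫ s in a..b, u s) = ∫ x, u x ∂μ := intervalIntegral.integral_of_le hab
  have hIb : (∫ s in a..b, (u s)^2) = ∫ x, (u x)^2 ∂μ := intervalIntegral.integral_of_le hab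
  have h1 : |∫ x, u x ∂μ| ≤ ∫ x, |u x| ∂μ := by
    simpa [Real.norm_eq_abs] using norm_integral_le_integral_norm (μ := μ) u
  have hnn2 : (0:ℝ) ≤ ∫ x, (u x)^2 ∂μ := integral_nonneg fun x => sq_nonneg _
  have key : (∫ x, |u x| ∂μ) ^ 2 ≤ (∫ x, (u x)^2 ∂μ) * (b - a) := by
    have hnn : (0:ℝ) ≤ ∫ x, |u x| ∂μ := integral_nonneg fun x => abs_nonneg _
    calc (∫ x, |u x| ∂μ) ^ 2
        ≤ ((∫ x, (u x)^2 ∂μ) ^ (1/(2:ℝ)) * (b - a) ^ (1/(2:ℝ))) ^ 2 := by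
          apply pow_le_pow_left₀ hnn h
      _ = (∫ x, (u x)^2 ∂μ) * (b - a) := by
          rw [mul_pow, ← Real.rpow_natCast ((∫ x, (u x)^2 ∂μ) ^ (1/(2:ℝ))) 2,
            ← Real.rpow_natCast ((b - a) ^ (1/(2:ℝ))) 2,
            ← Real.rpow_mul hnn2, ← Real.rpow_mul (sub_nonneg.2 hab)]
          norm_num
  rw [hIa, hIb]
  calc (∫ x, u x ∂μ) ^ 2 = |∫ x, u x ∂μ| ^ 2 := (sq_abs _).symm
    _ ≤ (∫ x, |u x| ∂μ) ^ 2 := pow_le_pow_left₀ (abs_nonneg _) h1 2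
    _ ≤ (∫ x, (u x)^2 ∂μ) * (b - a) := key
    _ = (b - a) * ∫ x, (u x)^2 ∂μ := mul_comm _ _

/-- Jensen's integral inequality for quadratic forms: for C¹ f and PSD symmetric G,
(b-a) ∫_a^b f'(s)ᵀ G f'(s) ds ≥ (f(b)-f(a))ᵀ G (f(b)-f(a)). -/
theorem jensen_quadratic_form
    (n : ℕ) (a b : ℝ) (hab : a < b)
    (f f' : ℝ → (Fin n → ℝ))
    (hderiv : ∀ s ∈ Set.Icc a b, HasDerivAt f (f' s) s)
    (hcont : ContinuousOn f' (Set.Icc a b))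
    (G : Matrix (Fin n) (Fin n) ℝ) (hG : G.PosSemidef) :
    (f b - f a) ⬝ᵥ (G *ᵥ (f b - f a))
      ≤ (b - a) * ∫ s in a..b, (f' s) ⬝ᵥ (G *ᵥ f' s) := by
  have huIcc : Set.uIcc a b = Set.Icc a b := Set.uIcc_of_le hab.le
  set C : Matrix (Fin n) (Fin n) ℝ := CFC.sqrt G with hCdef
  have hCC : C * C = G := CFC.sqrt_mul_sqrt_self G hG.nonneg
  have hCsym : Cᵀ = C := by
    have h := (CFC.sqrt_nonneg G).posSemidef.1
    rw [← Matrix.conjTranspose_eq_transpose_of_trivial]; exact h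
  -- key quadratic-form identity
  have hquad : ∀ x : Fin n → ℝ, x ⬝ᵥ (G *ᵥ x) = (C *ᵥ x) ⬝ᵥ (C *ᵥ x) := by
    intro x
    rw [← hCC, ← Matrix.mulVec_mulVec, Matrix.dotProduct_mulVec, ← Matrix.mulVec_transpose,
      hCsym]
  have hcontu : ContinuousOn f' (Set.uIcc a b) := huIcc ▸ hcont
  have hf'int : IntervalIntegrable f' volume a b := hcontu.intervalIntegrable
  have hftc : (∫ s in a..b, f' s) = f b - f a :=
    intervalIntegral.integral_eq_sub_of_hasDerivAt (fun s hs => hderiv s (huIcc ▸ hs)) hf'int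
  set g : ℝ → (Fin n → ℝ) := fun s => C *ᵥ f' s with hgdef
  set L : (Fin n → ℝ) →L[ℝ] (Fin n → ℝ) := LinearMap.toContinuousLinearMap C.mulVecLin with hLdef
  have hLapp : ∀ x, L x = C *ᵥ x := fun x => rfl
  have hgcont : ContinuousOn g (Set.Icc a b) := L.continuous.comp_continuousOn hcont
  have hgcontu : ContinuousOn g (Set.uIcc a b) := huIcc ▸ hgcont
  have hgint : IntervalIntegrable g volume a b := hgcontu.intervalIntegrable
  have hCv : C *ᵥ (f b - f a) = ∫ s in a..b, g s := by
    rw [← hftc, ← hLapp]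
    exact (L.intervalIntegral_comp_comm hf'int).symm
  have hcomp : ∀ i, (∫ s in a..b, g s) i = ∫ s in a..b, g s i := fun i =>
    ((ContinuousLinearMap.proj (R := ℝ) (φ := fun _ : Fin n => ℝ) i).intervalIntegral_comp_comm
      hgint).symm
  have hgicont : ∀ i, ContinuousOn (fun s => g s i) (Set.Icc a b) := fun i =>
    (continuous_apply i).comp_continuousOn hgcont
  have hsqint : ∀ i : Fin n, IntervalIntegrable (fun s => (g s i) ^ 2) volume a b := fun i =>
    (huIcc ▸ ((hgicont i).pow 2) : ContinuousOn _ (Set.uIcc a b)).intervalIntegrable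
  calc (f b - f a) ⬝ᵥ (G *ᵥ (f b - f a))
      = (C *ᵥ (f b - f a)) ⬝ᵥ (C *ᵥ (f b - f a)) := hquad _
    _ = ∑ i, (∫ s in a..b, g s i) ^ 2 := by
        rw [hCv, dotProduct]
        exact Finset.sum_congr rfl fun i _ => by rw [hcomp i, sq]
    _ ≤ ∑ i, (b - a) * ∫ s in a..b, (g s i) ^ 2 := by
        exact Finset.sum_le_sum fun i _ => sq_intervalIntegral_le hab.le (hgicont i)
    _ = (b - a) * ∑ i, ∫ s in a..b, (g s i) ^ 2 := by rw [Finset.mul_sum]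
    _ = (b - a) * ∫ s in a..b, ∑ i, (g s i) ^ 2 := by
        rw [intervalIntegral.integral_finset_sum fun i _ => hsqint i]
    _ = (b - a) * ∫ s in a..b, (f' s) ⬝ᵥ (G *ᵥ f' s) := by
        congr 1
        refine intervalIntegral.integral_congr fun s _ => ?_
        rw [hquad (f' s), dotProduct]
        exact Finset.sum_congr rfl fun i _ => pow_two _
end

section
/- Let R₁ be a symmetric positive semidefinite n×n matrix, S₁₂ an n×n matrix, and suppose Φ = [[R₁, S₁₂],[S₁₂ᵀ, R₁]] ⪰ 0. Then for any vectors v₁, v₂ ∈ ℝ^n and scalars θ ∈ (0,1): (1/θ) v₁ᵀ R₁ v₁ + (1/(1-θ)) v₂ᵀ R₁ v₂ ≥ [v₁; v₂]ᵀ Φ [v₁; v₂]. -/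
open Matrix

/-- Reciprocally convex combination lemma (Park et al. 2011):
if Φ = [[R₁,S₁₂],[S₁₂ᵀ,R₁]] ⪰ 0 then
(1/θ) v₁ᵀR₁v₁ + (1/(1-θ)) v₂ᵀR₁v₂ ≥ [v₁;v₂]ᵀ Φ [v₁;v₂] for θ ∈ (0,1). -/
theorem reciprocally_convex_lemma
    {n : ℕ} (R1 S12 : Matrix (Fin n) (Fin n) ℝ)
    (hR1 : R1.PosSemidef)
    (hΦ : (Matrix.fromBlocks R1 S12 S12ᵀ R1).PosSemidef)
    (v1 v2 : Fin n → ℝ) (θ : ℝ) (hθ : θ ∈ Set.Ioo (0 : ℝ) 1) :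
    (Sum.elim v1 v2) ⬝ᵥ ((Matrix.fromBlocks R1 S12 S12ᵀ R1) *ᵥ Sum.elim v1 v2)
      ≤ (1 / θ) * (v1 ⬝ᵥ (R1 *ᵥ v1)) + (1 / (1 - θ)) * (v2 ⬝ᵥ (R1 *ᵥ v2)) := by
  obtain ⟨hθ0, hθ1⟩ := hθ
  have h1θ : 0 < 1 - θ := by linarith
  set a := Real.sqrt ((1 - θ) / θ) with ha
  set b := Real.sqrt (θ / (1 - θ)) with hb
  have hab : a * b = 1 := by
    rw [ha, hb, ← Real.sqrt_mul (by positivity)]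
    rw [show (1 - θ) / θ * (θ / (1 - θ)) = 1 by field_simp]
    exact Real.sqrt_one
  have ha2 : a * a = (1 - θ) / θ := Real.mul_self_sqrt (by positivity)
  have hb2 : b * b = θ / (1 - θ) := Real.mul_self_sqrt (by positivity)
  have key := hΦ.dotProduct_mulVec_nonneg (Sum.elim (a • v1) (-(b • v2)))
  simp only [fromBlocks_mulVec, sumElim_dotProduct_sumElim, RCLike.star_def,
    Sum.elim_comp_inl, Sum.elim_comp_inr, mulVec_smul, mulVec_neg, mulVec_add,
    dotProduct_add, dotProduct_neg, neg_dotProduct,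
    dotProduct_smul, smul_dotProduct, smul_eq_mul, star_trivial] at key ⊢
  have hsym : v2 ⬝ᵥ S12ᵀ *ᵥ v1 = v1 ⬝ᵥ S12 *ᵥ v2 := by
    rw [dotProduct_mulVec, vecMul_transpose, dotProduct_comm]
  rw [hsym] at key ⊢
  set X := v1 ⬝ᵥ R1 *ᵥ v1
  set Y := v2 ⬝ᵥ R1 *ᵥ v2
  set Z := v1 ⬝ᵥ S12 *ᵥ v2
  have e1 : a * (a * X) = (1 - θ) / θ * X := by rw [← mul_assoc, ha2]
  have e2 : b * (b * Y) = θ / (1 - θ) * Y := by rw [← mul_assoc, hb2]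
  have e3 : b * (a * Z) = Z := by rw [← mul_assoc, mul_comm b a, hab, one_mul]
  have e4 : a * (b * Z) = Z := by rw [← mul_assoc, hab, one_mul]
  rw [e1] at key
  simp only [mul_neg, neg_neg] at key
  rw [e2, e3, e4] at key
  have r1 : 1 / θ * X = X + (1 - θ) / θ * X := by field_simp; ring
  have r2 : 1 / (1 - θ) * Y = Y + θ / (1 - θ) * Y := by field_simp; ring
  rw [r1, r2]
  linarith
end
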